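/- arXiv:0711.0909 — 4 statements merged into one kernel-verified Lean document; each statement's English description precedes it below -/
import Mathlib

section
/- A polynomial P in C[x_1,...,x_n] is quasi-symmetric if and only if P is symmetric under the quasi-symmetrizing action of S_n in Hivert's sense; moreover the set of quasi-symmetric polynomials in n variables forms a subring of C[x_1,...,x_n]. -/
/-! An exponent vector is determined by its support together with its composition. Hivert's
action by `σ` keeps the composition and moves the support to `σ (supp ν)`; hence it preserves
quasi-symmetry, and conversely any two vectors with the same composition are related by it.
For products, pick a permutation `τ` increasing on `supp μ` and carrying it onto `supp ν`: it
preserves the composition of every `α ≤ μ`, so renaming the variables of quasi-symmetric `P`, `Q`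
by `τ⁻¹` changes none of the coefficients entering `(P * Q).coeff μ`, while it moves
`(P * Q).coeff ν` to degree `μ`. -/

open MvPolynomial

/-- The composition obtained from an exponent vector by deleting its zero parts. -/
def qcomp {n : ℕ} (ν : Fin n →₀ ℕ) : List ℕ :=
  (List.ofFn fun i => ν i).filter (· ≠ 0)

/-- A quasi-symmetric polynomial. -/
def IsQuasiSym {n : ℕ} (P : MvPolynomial (Fin n) ℂ) : Prop :=
  ∀ ν μ : Fin n →₀ ℕ, qcomp ν = qcomp μ → P.coeff ν = P.coeff μ

/-- Hivert's quasi-symmetrizing action on an exponent vector: if `ν` is supported on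
`i₁ < … < i_l` with exponents `k₁, …, k_l`, the result is supported on the sorted list
`j₁ < … < j_l` of `σ(supp ν)`, with the same exponents `k₁, …, k_l` in order. -/
noncomputable def hivertExp {n : ℕ} (σ : Equiv.Perm (Fin n)) (ν : Fin n →₀ ℕ) : Fin n →₀ ℕ :=
  Finsupp.equivFunOnFinite.symm fun j =>
    ((ν.support.sort (· ≤ ·)).map ν).getD
      (((ν.support.image σ).sort (· ≤ ·)).idxOf j) 0

/-- Hivert's quasi-symmetrizing action of a permutation on a polynomial,
extended linearly from monomials. -/
noncomputable def hivertAct {n : ℕ} (σ : Equiv.Perm (Fin n))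
    (P : MvPolynomial (Fin n) ℂ) : MvPolynomial (Fin n) ℂ :=
  (AddMonoidAlgebra.coeff P).sum fun ν c => monomial (hivertExp σ ν) c

theorem List.idxOf_map_of_injective {α β : Type*} [DecidableEq α] [DecidableEq β] {f : α → β}
    (hf : Function.Injective f) (l : List α) (a : α) : (l.map f).idxOf (f a) = l.idxOf a := by
  induction l with
  | nil => rfl
  | cons b l ih => rw [List.map_cons, List.idxOf_cons, List.idxOf_cons, ih, hf.beq_eq]

theorem List.getD_map_idxOf {α M : Type*} [DecidableEq α] (l : List α) (f : α → M) (d : M)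
    (a : α) (ha : a ∉ l → f a = d) : (l.map f).getD (l.idxOf a) d = f a := by
  by_cases h : a ∈ l
  · rw [List.getD_eq_getElem _ _ (by simpa using List.idxOf_lt_length_iff.mpr h),
      List.getElem_map, List.getElem_idxOf]
  · rw [List.getD_eq_default _ _ (by simp [List.idxOf_eq_length h]), ha h]

theorem Finset.exists_perm_strictMonoOn_image_eq {α : Type*} [LinearOrder α] [Fintype α]
    {S T : Finset α} (h : S.card = T.card) :
    ∃ τ : Equiv.Perm α, StrictMonoOn τ S ∧ S.image τ = T := by
  let e : S ≃o T := (S.orderIsoOfFin rfl).symm.trans (T.orderIsoOfFin h.symm)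
  have he : ∀ x (hx : x ∈ S), e.toEquiv.extendSubtype x = e ⟨x, hx⟩ :=
    e.toEquiv.extendSubtype_apply_of_mem
  refine ⟨e.toEquiv.extendSubtype, fun x hx y hy hxy => ?_, ?_⟩
  · rw [he x hx, he y hy]
    exact e.strictMono (show (⟨x, hx⟩ : S) < ⟨y, hy⟩ from hxy)
  · ext j
    simp only [Finset.mem_image]
    refine ⟨?_, fun hj => ⟨e.symm ⟨j, hj⟩, (e.symm ⟨j, hj⟩).2, ?_⟩⟩
    · rintro ⟨i, hi, rfl⟩
      exact he i hi ▸ (e ⟨i, hi⟩).2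
    · rw [he _ (e.symm ⟨j, hj⟩).2]
      simp

namespace MvPolynomial

theorem coeff_rename_equiv {σ τ R : Type*} [CommSemiring R] (e : σ ≃ τ) (P : MvPolynomial σ R)
    (d : τ →₀ ℕ) : (rename e P).coeff d = P.coeff (Finsupp.equivMapDomain e.symm d) := by
  have hd : d = (Finsupp.equivMapDomain e.symm d).mapDomain e := by
    rw [← Finsupp.equivMapDomain_eq_mapDomain, ← Finsupp.equivMapDomain_trans,
      e.symm_trans_self, Finsupp.equivMapDomain_refl]
  conv_lhs => rw [hd]
  exact coeff_rename_mapDomain _ e.injective _ _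

theorem coeff_mul_congr_of_le {σ R : Type*} [CommSemiring R] {P P' Q Q' : MvPolynomial σ R}
    {μ : σ →₀ ℕ} (hP : ∀ α ≤ μ, P.coeff α = P'.coeff α) (hQ : ∀ α ≤ μ, Q.coeff α = Q'.coeff α) :
    (P * Q).coeff μ = (P' * Q').coeff μ := by
  classical
  rw [coeff_mul, coeff_mul]
  refine Finset.sum_congr rfl fun x hx => ?_
  rw [Finset.HasAntidiagonal.mem_antidiagonal] at hx
  rw [hP x.1 (hx ▸ le_self_add), hQ x.2 (hx ▸ le_add_self)]

end MvPolynomial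

open Finsupp

theorem Finsupp.support_equivMapDomain {α β M : Type*} [Zero M] [DecidableEq β] (e : α ≃ β)
    (l : α →₀ M) : (equivMapDomain e l).support = l.support.image e :=
  Finset.map_eq_image e.toEmbedding l.support

section Compositions

variable {n : ℕ}

theorem qcomp_eq_map_sort (ν : Fin n →₀ ℕ) : qcomp ν = ν.support.sort.map ν := by
  have hsort : (List.finRange n).filter (fun i => ν i ≠ 0) = ν.support.sort :=
    (((List.pairwise_lt_finRange n).filter _).sortedLT).eq_of_mem_iff (ν.support.sortedLT_sort)
      (by simp)
  rw [qcomp, List.ofFn_eq_map, List.filter_map, ← hsort]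
  rfl

theorem length_qcomp (ν : Fin n →₀ ℕ) : (qcomp ν).length = ν.support.card := by
  rw [qcomp_eq_map_sort, List.length_map, Finset.length_sort]

theorem qcomp_eq_nil_iff {ν : Fin n →₀ ℕ} : qcomp ν = [] ↔ ν = 0 := by
  rw [← List.length_eq_zero_iff, length_qcomp, Finset.card_eq_zero, Finsupp.support_eq_empty]

theorem eq_of_support_eq_of_qcomp_eq {ν μ : Fin n →₀ ℕ} (hs : ν.support = μ.support)
    (hq : qcomp ν = qcomp μ) : ν = μ := by
  rw [qcomp_eq_map_sort, qcomp_eq_map_sort, hs, List.map_inj_left] at hq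
  ext i
  by_cases hi : i ∈ μ.support
  · exact hq i (Finset.mem_sort _ |>.mpr hi)
  · rw [notMem_support_iff.mp hi, notMem_support_iff.mp (hs ▸ hi)]

theorem qcomp_equivMapDomain {τ : Equiv.Perm (Fin n)} {α : Fin n →₀ ℕ}
    (hτ : StrictMonoOn τ α.support) : qcomp (equivMapDomain τ α) = qcomp α := by
  rw [qcomp_eq_map_sort, qcomp_eq_map_sort]
  change ((α.support.map τ.toEmbedding).sort).map _ = _
  rw [← StrictMonoOn.map_finsetSort τ.toEmbedding _ hτ, List.map_map]
  congr 1
  ext i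
  simp

theorem equivMapDomain_eq_of_qcomp_eq {τ : Equiv.Perm (Fin n)} {ν μ : Fin n →₀ ℕ}
    (hτ : StrictMonoOn τ ν.support) (himage : ν.support.image τ = μ.support)
    (hq : qcomp ν = qcomp μ) : equivMapDomain τ ν = μ :=
  eq_of_support_eq_of_qcomp_eq ((support_equivMapDomain τ ν).trans himage)
    ((qcomp_equivMapDomain hτ).trans hq)

end Compositions

section Hivert

variable {n : ℕ}

theorem hivertExp_eq_equivMapDomain {σ τ : Equiv.Perm (Fin n)} {ν : Fin n →₀ ℕ}
    (hτ : StrictMonoOn τ ν.support) (himage : ν.support.image τ = ν.support.image σ) :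
    hivertExp σ ν = equivMapDomain τ ν := by
  have hsort : (ν.support.image σ).sort = ν.support.sort.map τ := by
    have h := StrictMonoOn.map_finsetSort τ.toEmbedding _ hτ
    rw [Finset.map_eq_image, Equiv.coe_toEmbedding] at h
    rw [← himage, h]
  ext j
  obtain ⟨i, rfl⟩ := τ.surjective j
  rw [hivertExp, equivFunOnFinite_symm_apply_apply, hsort,
    List.idxOf_map_of_injective τ.injective, List.getD_map_idxOf _ _ _ _
      (fun hi => Finsupp.notMem_support_iff.mp (by simpa using hi)),
    equivMapDomain_apply, Equiv.symm_apply_apply]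

theorem exists_hivertExp_eq_equivMapDomain (σ : Equiv.Perm (Fin n)) (ν : Fin n →₀ ℕ) :
    ∃ τ : Equiv.Perm (Fin n), StrictMonoOn τ ν.support ∧
      ν.support.image τ = ν.support.image σ ∧ hivertExp σ ν = equivMapDomain τ ν := by
  obtain ⟨τ, hτ, himage⟩ := Finset.exists_perm_strictMonoOn_image_eq
    (Finset.card_image_of_injective ν.support σ.injective).symm
  exact ⟨τ, hτ, himage, hivertExp_eq_equivMapDomain hτ himage⟩

theorem support_hivertExp (σ : Equiv.Perm (Fin n)) (ν : Fin n →₀ ℕ) :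
    (hivertExp σ ν).support = ν.support.image σ := by
  obtain ⟨τ, -, himage, hστ⟩ := exists_hivertExp_eq_equivMapDomain σ ν
  rw [hστ, support_equivMapDomain, himage]

theorem qcomp_hivertExp (σ : Equiv.Perm (Fin n)) (ν : Fin n →₀ ℕ) :
    qcomp (hivertExp σ ν) = qcomp ν := by
  obtain ⟨τ, hτ, -, hστ⟩ := exists_hivertExp_eq_equivMapDomain σ ν
  rw [hστ, qcomp_equivMapDomain hτ]

theorem hivertExp_eq_of_qcomp_eq {σ : Equiv.Perm (Fin n)} {ν μ : Fin n →₀ ℕ}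
    (himage : ν.support.image σ = μ.support) (hq : qcomp ν = qcomp μ) : hivertExp σ ν = μ :=
  eq_of_support_eq_of_qcomp_eq ((support_hivertExp σ ν).trans himage)
    ((qcomp_hivertExp σ ν).trans hq)

theorem hivertExp_inv_hivertExp (σ : Equiv.Perm (Fin n)) (ν : Fin n →₀ ℕ) :
    hivertExp σ⁻¹ (hivertExp σ ν) = ν :=
  hivertExp_eq_of_qcomp_eq (by simp [support_hivertExp, Finset.image_image])
    (qcomp_hivertExp σ ν)

theorem exists_hivertExp_eq {ν μ : Fin n →₀ ℕ} (hq : qcomp ν = qcomp μ) :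
    ∃ σ : Equiv.Perm (Fin n), hivertExp σ ν = μ := by
  obtain ⟨σ, -, himage⟩ := Finset.exists_perm_strictMonoOn_image_eq (S := ν.support)
    (T := μ.support) (by rw [← length_qcomp, hq, length_qcomp])
  exact ⟨σ, hivertExp_eq_of_qcomp_eq himage hq⟩

theorem coeff_hivertAct (σ : Equiv.Perm (Fin n)) (P : MvPolynomial (Fin n) ℂ)
    (μ : Fin n →₀ ℕ) : (hivertAct σ P).coeff μ = P.coeff (hivertExp σ⁻¹ μ) := by
  have hiff : ∀ ν, hivertExp σ ν = μ ↔ ν = hivertExp σ⁻¹ μ := fun ν =>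
    ⟨fun h => h ▸ (hivertExp_inv_hivertExp σ ν).symm,
      fun h => h ▸ by simpa using hivertExp_inv_hivertExp σ⁻¹ μ⟩
  rw [hivertAct, Finsupp.sum, coeff_sum]
  simp only [coeff_monomial, hiff, Finset.sum_ite_eq']
  split_ifs with h
  · rfl
  · exact (Finsupp.notMem_support_iff.mp h).symm

end Hivert

section QuasiSymmetric

variable {n : ℕ}

theorem isQuasiSym_iff_forall_hivertAct_eq (P : MvPolynomial (Fin n) ℂ) :
    IsQuasiSym P ↔ ∀ σ : Equiv.Perm (Fin n), hivertAct σ P = P := by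
  refine ⟨fun hP σ => ?_, fun hP ν μ hq => ?_⟩
  · ext μ
    rw [coeff_hivertAct]
    exact hP _ _ (qcomp_hivertExp σ⁻¹ μ)
  · obtain ⟨σ, rfl⟩ := exists_hivertExp_eq hq
    conv_rhs => rw [← hP σ]
    rw [coeff_hivertAct, hivertExp_inv_hivertExp]

theorem IsQuasiSym.mul {P Q : MvPolynomial (Fin n) ℂ} (hP : IsQuasiSym P) (hQ : IsQuasiSym Q) :
    IsQuasiSym (P * Q) := by
  intro ν μ hq
  obtain ⟨τ, hτ, himage⟩ := Finset.exists_perm_strictMonoOn_image_eq (S := μ.support)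
    (T := ν.support) (by rw [← length_qcomp, ← hq, length_qcomp])
  have hμν : equivMapDomain τ μ = ν := equivMapDomain_eq_of_qcomp_eq hτ himage hq.symm
  have hrename : ∀ {R : MvPolynomial (Fin n) ℂ}, IsQuasiSym R →
      ∀ α ≤ μ, (rename τ.symm R).coeff α = R.coeff α := fun hR α hα => by
    rw [coeff_rename_equiv, Equiv.symm_symm]
    exact hR _ _ (qcomp_equivMapDomain (hτ.mono (Finset.coe_subset.mpr (support_mono hα))))
  calc (P * Q).coeff ν = (rename τ.symm (P * Q)).coeff μ := by
        rw [coeff_rename_equiv, Equiv.symm_symm, hμν]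
    _ = (rename τ.symm P * rename τ.symm Q).coeff μ := by rw [map_mul]
    _ = (P * Q).coeff μ := coeff_mul_congr_of_le (hrename hP) (hrename hQ)

variable (n) in
def quasiSymSubring : Subring (MvPolynomial (Fin n) ℂ) where
  carrier := {P | IsQuasiSym P}
  zero_mem' _ _ _ := by rw [coeff_zero, coeff_zero]
  one_mem' ν μ hq := by
    have hzero : ν = 0 ↔ μ = 0 := by rw [← qcomp_eq_nil_iff, hq, qcomp_eq_nil_iff]
    simp only [coeff_one, eq_comm (a := (0 : Fin n →₀ ℕ)), hzero]
  add_mem' hP hQ ν μ hq := by rw [coeff_add, coeff_add, hP ν μ hq, hQ ν μ hq]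
  neg_mem' hP ν μ hq := by rw [coeff_neg, coeff_neg, hP ν μ hq]
  mul_mem' hP hQ := hP.mul hQ

end QuasiSymmetric

/-- `P` is quasi-symmetric iff it is invariant under Hivert's
quasi-symmetrizing action of `Sₙ`; moreover the quasi-symmetric polynomials in `n`
variables form a subring of `ℂ[x₁,…,xₙ]`. -/
theorem quasiSym_iff_hivert_invariant (n : ℕ) :
    (∀ P : MvPolynomial (Fin n) ℂ,
      IsQuasiSym P ↔ ∀ σ : Equiv.Perm (Fin n), hivertAct σ P = P) ∧
    ∃ R : Subring (MvPolynomial (Fin n) ℂ),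
      (R : Set (MvPolynomial (Fin n) ℂ)) = {P | IsQuasiSym P} :=
  ⟨isQuasiSym_iff_forall_hivertAct_eq, quasiSymSubring n, rfl⟩
end

section
/- Let S be a set of polynomials in C[x_1,...,x_n], m a positive integer, and S^m = {P(x_1^m,...,x_n^m) : P ∈ S}. If G is the reduced Gröbner basis of the ideal generated by S (with respect to the lexicographic order), then G^m = {g(x_1^m,...,x_n^m) : g ∈ G} is a Gröbner basis of the ideal generated by S^m. -/
/-!
Write the leading exponent of a nonzero `f ∈ ⟨S^m⟩` as `m • ν + r` with `r < m` coordinatewise,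
and let `f_r` collect the coefficients of `f` at the exponents `m • ν' + r`, placed at `ν'`.
The operation `f ↦ f_r` commutes with multiplication by any `q(X^m)`, so it maps `⟨S^m⟩` into
`⟨S⟩`; and since `m • · + r` is strictly monotone for lex, `f_r` has leading exponent `ν`.
Some `g ∈ G` has leading exponent dividing `ν`, and then `g(X^m)`, whose leading exponent is
`m • LM g`, has leading exponent dividing `m • ν + r`.
-/

open MvPolynomial

/-- The leading monomial of a polynomial with respect to the lexicographic order
(`x^ν > x^μ` iff the first nonzero entry of `ν - μ` is positive); by convention
`LM 0 = 0`. -/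
noncomputable def lm {n : ℕ} (P : MvPolynomial (Fin n) ℂ) : Fin n →₀ ℕ :=
  ofLex (WithBot.unbotD 0 (P.support.image (toLex : (Fin n →₀ ℕ) → Lex (Fin n →₀ ℕ))).max)

/-- `G` is a Gröbner basis of the ideal `I` (w.r.t. lex): `G ⊆ I` and the leading
monomial of every nonzero element of `I` is divisible by the leading monomial of some
nonzero element of `G`. -/
def IsGrobnerBasis {n : ℕ} (G : Set (MvPolynomial (Fin n) ℂ))
    (I : Ideal (MvPolynomial (Fin n) ℂ)) : Prop :=
  G ⊆ I ∧ ∀ f ∈ I, f ≠ 0 → ∃ g ∈ G, g ≠ 0 ∧ ∀ i, lm g i ≤ lm f i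

/-- `G` is the reduced Gröbner basis of `I`: a Gröbner basis consisting of monic
polynomials, no monomial of any element being divisible by the leading monomial of
another element. -/
def IsReducedGrobnerBasis {n : ℕ} (G : Set (MvPolynomial (Fin n) ℂ))
    (I : Ideal (MvPolynomial (Fin n) ℂ)) : Prop :=
  IsGrobnerBasis G I ∧ (0 : MvPolynomial (Fin n) ℂ) ∉ G ∧
    ∀ g ∈ G, g.coeff (lm g) = 1 ∧
      ∀ g' ∈ G, g' ≠ g → ∀ ν ∈ g.support, ¬ ∀ i, lm g' i ≤ ν i

/-- The substitution `xᵢ ↦ xᵢ^m`. -/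
noncomputable def subst (n m : ℕ) :
    MvPolynomial (Fin n) ℂ →ₐ[ℂ] MvPolynomial (Fin n) ℂ :=
  MvPolynomial.bind₁ fun i => (X i : MvPolynomial (Fin n) ℂ) ^ m

open scoped MonomialOrder

namespace Finsupp

variable {σ : Type*} {p : ℕ}

theorem nsmul_add_injective (hp : 0 < p) (r : σ →₀ ℕ) :
    Function.Injective fun ν : σ →₀ ℕ => p • ν + r :=
  (add_left_injective r).comp (smul_right_injective _ hp.ne')

theorem exists_nsmul_add_eq (hp : 0 < p) (μ : σ →₀ ℕ) :
    ∃ ν r : σ →₀ ℕ, (∀ i, r i < p) ∧ p • ν + r = μ :=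
  ⟨μ.mapRange (· / p) (Nat.zero_div p), μ.mapRange (· % p) (Nat.zero_mod p),
    fun i => Nat.mod_lt _ hp, by ext i; simp [Nat.div_add_mod]⟩

end Finsupp

namespace MvPolynomial

variable {σ R : Type*} [CommSemiring R] {p : ℕ}

/-- The part of `f` supported on the exponents `p • ν + r`, with `x ^ (p • ν + r)` renamed to
`x ^ ν`. -/
noncomputable def contract (hp : 0 < p) (r : σ →₀ ℕ) (f : MvPolynomial σ R) :
    MvPolynomial σ R :=
  AddMonoidAlgebra.ofCoeff <| (AddMonoidAlgebra.coeff f).comapDomain (fun ν => p • ν + r)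
    (Finsupp.nsmul_add_injective hp r).injOn

@[simp]
theorem coeff_contract (hp : 0 < p) (r ν : σ →₀ ℕ) (f : MvPolynomial σ R) :
    coeff ν (contract hp r f) = coeff (p • ν + r) f :=
  rfl

variable (hp : 0 < p) {r : σ →₀ ℕ}

theorem contract_add (f g : MvPolynomial σ R) :
    contract hp r (f + g) = contract hp r f + contract hp r g := by
  ext ν; simp

theorem contract_zero : contract hp r (0 : MvPolynomial σ R) = 0 := by
  ext ν; simp

theorem contract_X_pow_mul (hr : ∀ i, r i < p) (i : σ) (f : MvPolynomial σ R) :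
    contract hp r (X i ^ p * f) = X i * contract hp r f := by
  classical
  ext ν
  rw [coeff_contract, X_pow_eq_monomial, coeff_monomial_mul', one_mul, coeff_X_mul']
  have hri := hr i
  -- as `r i < p`, `X i ^ p` divides `x ^ (p • ν + r)` exactly when `X i` divides `x ^ ν`
  by_cases hνi : ν i = 0
  · rw [if_neg (by simp [hνi, hri]), if_neg (by simpa using hνi)]
  have hle : p ≤ p * ν i := Nat.le_mul_of_pos_right p (Nat.pos_of_ne_zero hνi)
  rw [if_pos (by simpa using le_add_right hle), if_pos (by simpa using hνi), coeff_contract]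
  congr 1
  ext j
  rcases eq_or_ne j i with rfl | hji
  · simp only [Finsupp.tsub_apply, Finsupp.add_apply, Finsupp.smul_apply, smul_eq_mul,
      Finsupp.single_eq_same, Nat.mul_sub, mul_one]
    omega
  · simp [hji.symm]

theorem contract_expand_mul (hr : ∀ i, r i < p) (q f : MvPolynomial σ R) :
    contract hp r (expand p q * f) = q * contract hp r f := by
  induction q using MvPolynomial.induction_on generalizing f with
  | C a => ext ν; simp [coeff_C_mul]
  | add q₁ q₂ h₁ h₂ => rw [map_add, add_mul, contract_add, h₁, h₂, add_mul]
  | mul_X q i h =>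
    rw [map_mul, expand_X, mul_assoc, h, contract_X_pow_mul hp hr, mul_assoc]

theorem contract_mem_span_of_mem_span_image_expand (hr : ∀ i, r i < p)
    {S : Set (MvPolynomial σ R)} {f : MvPolynomial σ R} (hf : f ∈ Ideal.span (expand p '' S)) :
    contract hp r f ∈ Ideal.span S := by
  suffices ∀ a, contract hp r (a * f) ∈ Ideal.span S by simpa using this 1
  induction hf using Submodule.span_induction with
  | mem x hx =>
    obtain ⟨s, hs, rfl⟩ := hx
    intro a
    rw [mul_comm, contract_expand_mul hp hr]
    exact Ideal.mul_mem_right _ _ (Ideal.subset_span hs)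
  | zero => simp [contract_zero]
  | add x y _ _ hx hy => intro a; rw [mul_add, contract_add]; exact add_mem (hx a) (hy a)
  | smul b x _ hx => intro a; rw [smul_eq_mul, ← mul_assoc]; exact hx (a * b)

end MvPolynomial

namespace MonomialOrder

variable {σ R : Type*} [CommSemiring R] {m : MonomialOrder σ} {p : ℕ}

theorem toSyn_nsmul_add_le_iff (hp : 0 < p) {a b r : σ →₀ ℕ} :
    m.toSyn (p • a + r) ≤ m.toSyn (p • b + r) ↔ m.toSyn a ≤ m.toSyn b := by
  simp only [map_add, map_nsmul, add_le_add_iff_right]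
  exact nsmul_le_nsmul_iff_right hp.ne'

theorem degree_eq_of_forall_le {f : MvPolynomial σ R} {d : σ →₀ ℕ} (hd : d ∈ f.support)
    (h : ∀ c ∈ f.support, c ≼[m] d) : m.degree f = d :=
  m.toSyn.injective (le_antisymm (m.degree_le_iff.2 h) (m.le_degree hd))

theorem degree_expand (hp : 0 < p) (f : MvPolynomial σ R) :
    m.degree (expand p f) = p • m.degree f := by
  classical
  rcases eq_or_ne f 0 with rfl | hf
  · simp
  refine degree_eq_of_forall_le ?_ fun c hc => ?_
  · rw [mem_support_iff, coeff_expand_smul p hp.ne']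
    exact coeff_degree_ne_zero_iff.2 hf
  · obtain ⟨d, hd, rfl⟩ := Finset.mem_image.1 (support_expand_subset f hc)
    simpa using (toSyn_nsmul_add_le_iff hp (r := 0)).2 (m.le_degree hd)

variable (hp : 0 < p) {f : MvPolynomial σ R} {ν r : σ →₀ ℕ}

theorem coeff_contract_of_degree_eq (h : m.degree f = p • ν + r) :
    coeff ν (contract hp r f) = m.leadingCoeff f := by
  rw [coeff_contract, ← h, leadingCoeff]

theorem contract_ne_zero (hf : f ≠ 0) (h : m.degree f = p • ν + r) : contract hp r f ≠ 0 :=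
  ne_zero_iff.2 ⟨ν, by rw [coeff_contract_of_degree_eq hp h]; exact leadingCoeff_ne_zero_iff.2 hf⟩

theorem degree_contract (hf : f ≠ 0) (h : m.degree f = p • ν + r) :
    m.degree (contract hp r f) = ν := by
  refine degree_eq_of_forall_le ?_ fun c hc => ?_
  · rw [mem_support_iff, coeff_contract_of_degree_eq hp h]
    exact leadingCoeff_ne_zero_iff.2 hf
  · rw [mem_support_iff, coeff_contract, ← mem_support_iff] at hc
    exact (toSyn_nsmul_add_le_iff hp).1 (h ▸ m.le_degree hc)

end MonomialOrder

theorem lm_eq_degree_lex {n : ℕ} (f : MvPolynomial (Fin n) ℂ) :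
    lm f = MonomialOrder.lex.degree f := by
  rcases eq_or_ne f 0 with rfl | hf
  · simp [lm]
  have hne : (f.support.image (toLex : (Fin n →₀ ℕ) → Lex (Fin n →₀ ℕ))).Nonempty :=
    (support_nonempty.2 hf).image _
  rw [lm, ← Finset.coe_max' hne, WithBot.unbotD_coe, Finset.max'_eq_sup', Finset.sup'_eq_sup,
    Finset.sup_image]
  rfl

/-- if `G` is the reduced Gröbner basis of `⟨S⟩` (w.r.t. lex), then
`G^m = {g(x₁^m,…,xₙ^m) : g ∈ G}` is a Gröbner basis of `⟨S^m⟩`. -/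
theorem grobner_of_power_substitution (n m : ℕ) (hm : 0 < m)
    (S G : Set (MvPolynomial (Fin n) ℂ))
    (hG : IsReducedGrobnerBasis G (Ideal.span S)) :
    IsGrobnerBasis (subst n m '' G) (Ideal.span (subst n m '' S)) := by
  obtain ⟨⟨hGS, hG_lm⟩, -⟩ := hG
  have hsubst : subst n m = expand m := rfl
  simp only [IsGrobnerBasis, hsubst, lm_eq_degree_lex] at hG_lm ⊢
  refine ⟨?_, fun f hf hf0 => ?_⟩
  · rw [← Ideal.map_span]
    exact Set.image_subset_iff.2 fun g hg => Ideal.mem_map_of_mem _ (hGS hg)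
  obtain ⟨ν, r, hr, hf_deg⟩ := Finsupp.exists_nsmul_add_eq hm (MonomialOrder.lex.degree f)
  obtain ⟨g, hg, hg0, hg_deg⟩ := hG_lm _ (contract_mem_span_of_mem_span_image_expand hm hr hf)
    (MonomialOrder.contract_ne_zero hm hf0 hf_deg.symm)
  rw [MonomialOrder.degree_contract hm hf0 hf_deg.symm] at hg_deg
  refine ⟨expand m g, Set.mem_image_of_mem _ hg, (expand_ne_zero hm).2 hg0, fun i => ?_⟩
  rw [MonomialOrder.degree_expand hm, ← hf_deg]
  simpa using le_add_right (Nat.mul_le_mul_left m (hg_deg i))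
end

section
/- The number of Dyck vectors ν ∈ N^n with total sum ν_1+...+ν_n = k equals the ballot number ((n-k)/(n+k))·binom(n+k, k), for 0 ≤ k ≤ n-1, and equals 0 for k ≥ n. -/
/-!
Deleting the last entry of a Dyck vector in `ℕ^(n+1)` with sum `k ≤ n` leaves an arbitrary Dyck
vector in `ℕ^n` with some sum `j ≤ k`, the deleted entry being `k - j`. Hence the counts `D(n, k)`
satisfy `D(n + 1, k + 1) = D(n + 1, k) + D(n, k + 1)` for `k < n`, with `D(n, 0) = 1` and
`D(n, n) = 0`; the ballot numbers satisfy the same recurrence. For `k ≥ n` the constraint at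
`j = n` already fails.
-/

/-- A Dyck vector: `ν_1 + … + ν_j ≤ j - 1` for all `1 ≤ j ≤ n` (0-indexed form). -/
def IsDyck {n : ℕ} (ν : Fin n → ℕ) : Prop :=
  ∀ k : Fin n, ∑ i ∈ Finset.univ.filter (· ≤ k), ν i ≤ (k : ℕ)

open Finset

theorem isDyck_iff_sum_Iic_le {n : ℕ} (ν : Fin n → ℕ) :
    IsDyck ν ↔ ∀ k : Fin n, ∑ i ∈ Iic k, ν i ≤ k := by
  simp only [IsDyck, filter_ge_eq_Iic]

theorem isDyck_snoc_iff {n : ℕ} (μ : Fin n → ℕ) (x : ℕ) :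
    IsDyck (Fin.snoc μ x : Fin (n + 1) → ℕ) ↔ IsDyck μ ∧ ∑ i, μ i + x ≤ n := by
  rw [isDyck_iff_sum_Iic_le, isDyck_iff_sum_Iic_le, Fin.forall_fin_succ', ← Fin.top_eq_last,
    Iic_top, Fin.top_eq_last, Fin.sum_univ_castSucc]
  simp only [Fin.sum_Iic_castSucc, Fin.snoc_castSucc, Fin.snoc_last, Fin.val_castSucc, Fin.val_last]

abbrev DyckVectorOfSum (n k : ℕ) : Type := {ν : Fin n → ℕ // IsDyck ν ∧ ∑ i, ν i = k}

instance (n k : ℕ) : Finite (DyckVectorOfSum n k) :=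
  Finite.of_injective
    (fun ν => (⟨ν.1, Nat.mem_antidiagonalTuple.2 ν.2.2⟩ : Nat.antidiagonalTuple n k))
    fun _ _ h => Subtype.ext (by simpa using h)

theorem card_dyckVectorOfSum_zero (n : ℕ) : Nat.card (DyckVectorOfSum n 0) = 1 := by
  refine Nat.card_eq_one_iff_exists.2 ⟨⟨0, by simp [IsDyck], by simp⟩, fun ν => ?_⟩
  ext i
  simpa using (sum_eq_zero_iff.1 ν.2.2) i (mem_univ i)

theorem IsDyck.sum_lt {n : ℕ} {ν : Fin n → ℕ} (hν : IsDyck ν) (hn : 0 < n) : ∑ i, ν i < n := by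
  obtain ⟨m, rfl⟩ := Nat.exists_eq_add_of_lt hn
  have := (isDyck_iff_sum_Iic_le ν).1 hν (Fin.last _)
  rw [← Fin.top_eq_last, Iic_top] at this
  simpa using this

theorem card_dyckVectorOfSum_of_le {n k : ℕ} (hn : 0 < n) (hk : n ≤ k) :
    Nat.card (DyckVectorOfSum n k) = 0 := by
  have : IsEmpty (DyckVectorOfSum n k) := ⟨fun ν => by
    have := ν.2.1.sum_lt hn
    omega⟩
  exact Nat.card_of_isEmpty

theorem IsDyck.init {n : ℕ} {ν : Fin (n + 1) → ℕ} (hν : IsDyck ν) : IsDyck (Fin.init ν) := by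
  rw [← Fin.snoc_init_self ν, isDyck_snoc_iff] at hν
  exact hν.1

def dyckVectorOfSumSuccEquiv {n k : ℕ} (hk : k ≤ n) :
    DyckVectorOfSum (n + 1) k ≃ Σ j : Fin (k + 1), DyckVectorOfSum n j where
  toFun ν := ⟨⟨∑ i, Fin.init ν.1 i, by
      have := ν.2.2
      rw [Fin.sum_univ_castSucc] at this
      simp only [Fin.init]
      omega⟩, ⟨Fin.init ν.1, ν.2.1.init, rfl⟩⟩
  invFun μ := ⟨Fin.snoc μ.2.1 (k - μ.1), (isDyck_snoc_iff _ _).2 ⟨μ.2.2.1, by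
      have := μ.1.2
      have := μ.2.2.2
      omega⟩, by
      rw [Fin.sum_univ_castSucc]
      simp only [Fin.snoc_castSucc, Fin.snoc_last, μ.2.2.2]
      omega⟩
  left_inv ν := by
    have := ν.2.2
    rw [Fin.sum_univ_castSucc] at this
    ext : 1
    simp only [Fin.init]
    convert Fin.snoc_init_self ν.1 using 2
    omega
  right_inv μ := by
    refine Sigma.subtype_ext (Fin.ext ?_) ?_
    · simpa [Fin.init] using μ.2.2.2
    · simp

theorem card_dyckVectorOfSum_succ {n k : ℕ} (hk : k ≤ n) :
    Nat.card (DyckVectorOfSum (n + 1) k) = ∑ j ∈ range (k + 1), Nat.card (DyckVectorOfSum n j) := by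
  rw [Nat.card_congr (dyckVectorOfSumSuccEquiv hk), Nat.card_sigma,
    Fin.sum_univ_eq_sum_range (fun j => Nat.card (DyckVectorOfSum n j))]

theorem card_dyckVectorOfSum_succ_succ {n k : ℕ} (hk : k + 1 ≤ n) :
    Nat.card (DyckVectorOfSum (n + 1) (k + 1)) =
      Nat.card (DyckVectorOfSum (n + 1) k) + Nat.card (DyckVectorOfSum n (k + 1)) := by
  rw [card_dyckVectorOfSum_succ hk, sum_range_succ, ← card_dyckVectorOfSum_succ (by omega)]

/-- Pascal's rule for the ballot numbers `B(n, k) = (n - k) / (n + k) * C(n + k, k)`, each given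
through `B(n, k) * (n + k) = (n - k) * C(n + k, k)`. -/
theorem ballot_pascal {n k a b : ℕ} (hk : k + 1 ≤ n)
    (ha : a * (n + 1 + k) = (n + 1 - k) * (n + 1 + k).choose k)
    (hb : b * (n + (k + 1)) = (n - (k + 1)) * (n + (k + 1)).choose (k + 1)) :
    (a + b) * (n + 1 + (k + 1)) = (n + 1 - (k + 1)) * (n + 1 + (k + 1)).choose (k + 1) := by
  have pascal := Nat.choose_succ_succ (n + 1 + k) k
  have absorb := Nat.choose_succ_right_eq (n + 1 + k) k
  rw [show n + 1 + k - k = n + 1 by omega] at absorb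
  rw [show n + (k + 1) = n + 1 + k by omega] at hb
  rw [show n + 1 + (k + 1) = n + 1 + k + 1 by omega, pascal]
  refine Nat.eq_of_mul_eq_mul_right (show 0 < n + 1 + k by omega) ?_
  zify [show k ≤ n + 1 by omega, show k + 1 ≤ n by omega, show k + 1 ≤ n + 1 by omega]
    at ha hb absorb ⊢
  linear_combination ((n : ℤ) + k + 2) * ha + ((n : ℤ) + k + 2) * hb - 2 * absorb

theorem card_dyckVectorOfSum_mul {n k : ℕ} (hk : k ≤ n) :
    Nat.card (DyckVectorOfSum n k) * (n + k) = (n - k) * (n + k).choose k := by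
  induction n generalizing k with
  | zero => simp [Nat.le_zero.1 hk]
  | succ n ihn =>
    induction k with
    | zero => simp [card_dyckVectorOfSum_zero]
    | succ k ihk =>
      rcases (Nat.le_of_lt_succ hk).eq_or_lt with rfl | hkn
      · simp [card_dyckVectorOfSum_of_le]
      · rw [card_dyckVectorOfSum_succ_succ hkn]
        exact ballot_pascal hkn (ihk (by omega)) (ihn hkn)

/-- the number of Dyck vectors in `ℕ^n` with total sum `k` is the
ballot number `((n-k)/(n+k))·C(n+k,k)` for `0 ≤ k ≤ n-1`, and `0` for `k ≥ n`. -/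
theorem card_dyck_vectors_of_sum (n k : ℕ) (hn : 0 < n) :
    (k < n →
      Nat.card {ν : Fin n → ℕ // IsDyck ν ∧ ∑ i, ν i = k}
        = (n - k) * (n + k).choose k / (n + k)) ∧
    (n ≤ k → Nat.card {ν : Fin n → ℕ // IsDyck ν ∧ ∑ i, ν i = k} = 0) :=
  ⟨fun hk => by
    rw [← card_dyckVectorOfSum_mul hk.le, Nat.mul_div_cancel _ (by omega)],
  card_dyckVectorOfSum_of_le hn⟩
end

section
/- Substituting t = 1 into the Hilbert series identity: (1+1+...+1)^n · F_n(1) = m^n · C_n, i.e., Σ_{k=0}^{n-1} ((n-k)/(n+k))·binom(n+k, k) = C_n = (1/(n+1))·binom(2n, n). -/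
/-!
The summands are the ballot numbers `b(n, k) = (n - k) / (n + k) * C(n + k, k)`. They satisfy
Pascal's rule `b(n + 1, k + 1) = b(n + 1, k) + b(n, k + 1)` for `k < n`, so the partial row sums
telescope to the next row: `∑_{k ≤ K} b(n, k) = b(n + 1, K)` for `K < n`. The full row sum is
therefore `b(n + 1, n - 1) = C(2n, n - 1) / n = C(2n, n) / (n + 1) = Cₙ`.
-/

open Finset

/-- The division is exact, see `ballot_dvd`. -/
def ballot (n k : ℕ) : ℕ := (n - k) * (n + k).choose k / (n + k)

lemma dvd_mul_choose (m k : ℕ) : m ∣ k * m.choose k := by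
  rcases k with _ | k
  · simp
  rcases m with _ | m
  · simp
  exact ⟨m.choose k, by rw [Nat.add_one_mul_choose_eq, mul_comm]⟩

lemma ballot_dvd (n k : ℕ) : n + k ∣ (n - k) * (n + k).choose k := by
  rw [Nat.sub_mul]
  refine Nat.dvd_sub ?_ (dvd_mul_choose _ _)
  rw [← Nat.choose_symm_add]
  exact dvd_mul_choose (n + k) n

lemma cast_ballot {n k : ℕ} (hk : k ≤ n) :
    (ballot n k : ℚ) = (n - k) / (n + k) * (n + k).choose k := by
  rw [ballot, Nat.cast_div_charZero (ballot_dvd n k)]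
  push_cast [Nat.cast_sub hk]
  ring

lemma ballot_succ_succ {n k : ℕ} (h : k < n) :
    ballot (n + 1) (k + 1) = ballot (n + 1) k + ballot n (k + 1) := by
  have hup : ((n + k + 2).choose (k + 1) : ℚ) = (n + k + 2) * (n + k + 1).choose k / (k + 1) := by
    rw [eq_div_iff (by positivity)]
    exact_mod_cast (Nat.add_one_mul_choose_eq (n + k + 1) k).symm
  have hright : ((n + k + 1).choose (k + 1) : ℚ) = (n + k + 1).choose k * (n + 1) / (k + 1) := by
    rw [eq_div_iff (by positivity)]
    have := Nat.choose_succ_right_eq (n + k + 1) k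
    rw [show n + k + 1 - k = n + 1 by omega] at this
    exact_mod_cast this
  apply Nat.cast_injective (R := ℚ)
  push_cast
  rw [cast_ballot (by omega), cast_ballot (by omega), cast_ballot (by omega)]
  push_cast [show n + 1 + (k + 1) = n + k + 2 by ring, show n + 1 + k = n + k + 1 by ring,
    show n + (k + 1) = n + k + 1 by ring, hup, hright]
  field_simp
  ring

lemma sum_range_succ_ballot {n K : ℕ} (h : K < n) :
    ∑ k ∈ range (K + 1), ballot n k = ballot (n + 1) K := by
  induction K with
  | zero => simp [ballot, Nat.div_self (show 0 < n from h)]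
  | succ K ih => rw [sum_range_succ, ih (by omega), ballot_succ_succ (by omega)]

lemma ballot_add_two_self (n : ℕ) : ballot (n + 2) n = catalan (n + 1) := by
  have hcat : (catalan (n + 1) : ℚ) = (2 * n + 2).choose (n + 1) / (n + 2) := by
    rw [eq_div_iff (by positivity)]
    have := succ_mul_catalan_eq_centralBinom (n + 1)
    rw [Nat.centralBinom_eq_two_mul_choose, mul_comm] at this
    exact_mod_cast this
  have hsym : ((2 * n + 2).choose n : ℚ) = (2 * n + 2).choose (n + 1) * (n + 1) / (n + 2) := by
    rw [eq_div_iff (by positivity)]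
    have := Nat.choose_succ_right_eq (2 * n + 2) n
    rw [show 2 * n + 2 - n = n + 2 by omega] at this
    exact_mod_cast this.symm
  apply Nat.cast_injective (R := ℚ)
  rw [cast_ballot (by omega), hcat]
  push_cast [show n + 2 + n = 2 * n + 2 by ring, hsym]
  field_simp
  ring

lemma sum_range_ballot_eq_catalan {n : ℕ} (hn : 0 < n) :
    ∑ k ∈ range n, ballot n k = catalan n := by
  obtain ⟨N, rfl⟩ : ∃ N, n = N + 1 := ⟨n - 1, by omega⟩
  rw [sum_range_succ_ballot N.lt_succ_self, ballot_add_two_self]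

theorem ballot_sum_eq_catalan_general (n m : ℕ) (hn : 0 < n) :
    m ^ n * (∑ k ∈ Finset.range n, (n - k) * (n + k).choose k / (n + k))
        = m ^ n * catalan n ∧
    (∑ k ∈ Finset.range n, (n - k) * (n + k).choose k / (n + k)) = catalan n := by
  have h := sum_range_ballot_eq_catalan hn
  exact ⟨congrArg (m ^ n * ·) h, h⟩

/-- evaluating the Hilbert series identity at `t = 1`:
`(1+⋯+1)^n · Fₙ(1) = mⁿ · Cₙ`, i.e. `Σ_{k=0}^{n-1} ((n-k)/(n+k))·C(n+k,k) = Cₙ`. -/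
theorem ballot_sum_eq_catalan (n m : ℕ) (hn : 0 < n) (hm : 0 < m) :
    m ^ n * (∑ k ∈ Finset.range n, (n - k) * (n + k).choose k / (n + k))
        = m ^ n * catalan n ∧
    (∑ k ∈ Finset.range n, (n - k) * (n + k).choose k / (n + k)) = catalan n :=
  ballot_sum_eq_catalan_general n m hn
end
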